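/- arXiv:2104.04467 — 8 statements merged into one kernel-verified Lean document; each statement's English description precedes it below -/
import Mathlib

section
/- Let d ∈ (0,1) and define the WENO-M mapping function g(ω) = ω(d + d² − 3dω + ω²)/(d² + (1 − 2d)ω) on a neighborhood of d. Then g is twice differentiable at ω = d with g′(d) = 0 and g″(d) = 0. -/
/-!
Dividing by the denominator `D(ω) = d² + (1 - 2d)ω` gives
`g(ω) = d + (ω - d)³ / D(ω)`, and `D(d) = d(1 - d) ≠ 0`. A function of the form
`c + (ω - d)³ k(ω)` with `k` of class `C²` near `d` has derivative `(ω - d)² m(ω)` near `d`,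
with `m` differentiable at `d`, so both of its first two derivatives vanish at `d`.
-/

open Filter Topology

theorem ContDiffAt.differentiableAt_deriv {k : ℝ → ℝ} {a : ℝ} (hk : ContDiffAt ℝ 2 k a) :
    DifferentiableAt ℝ (deriv k) a :=
  -- `deriv k x` is `fderiv ℝ k x 1` by definition
  ((hk.fderiv_right (m := 1) le_rfl).clm_apply contDiffAt_const).differentiableAt one_ne_zero

theorem hasDerivAt_sub_sq_mul_zero {m : ℝ → ℝ} {a : ℝ} (hm : DifferentiableAt ℝ m a) :
    HasDerivAt (fun x => (x - a) ^ 2 * m x) 0 a := by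
  simpa using (((hasDerivAt_id' a).sub_const a).fun_pow 2).fun_mul hm.hasDerivAt

theorem hasDerivAt_const_add_sub_pow_three_mul {k : ℝ → ℝ} {a c x : ℝ}
    (hk : DifferentiableAt ℝ k x) :
    HasDerivAt (fun y => c + (y - a) ^ 3 * k y)
      ((x - a) ^ 2 * (3 * k x + (x - a) * deriv k x)) x := by
  refine ((((hasDerivAt_id' x).sub_const a).fun_pow 3).fun_mul hk.hasDerivAt).const_add c
    |>.congr_deriv ?_
  norm_num
  ring

theorem hasDerivAt_zero_of_eventuallyEq_const_add_sub_pow_three_mul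
    {f k : ℝ → ℝ} {a c : ℝ} (hk : ContDiffAt ℝ 2 k a)
    (hf : f =ᶠ[𝓝 a] fun x => c + (x - a) ^ 3 * k x) :
    HasDerivAt f 0 a ∧ HasDerivAt (deriv f) 0 a := by
  have hk_near : ∀ᶠ x in 𝓝 a, DifferentiableAt ℝ k x :=
    (hk.eventually (by simp)).mono fun x hx => hx.differentiableAt two_ne_zero
  have hderiv : deriv f =ᶠ[𝓝 a] fun x => (x - a) ^ 2 * (3 * k x + (x - a) * deriv k x) := by
    filter_upwards [hf.eventuallyEq_nhds, hk_near] with x hfx hkx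
    rw [hfx.deriv_eq]
    exact (hasDerivAt_const_add_sub_pow_three_mul hkx).deriv
  constructor
  · simpa using (hasDerivAt_const_add_sub_pow_three_mul (c := c)
      (hk.differentiableAt two_ne_zero)).congr_of_eventuallyEq hf
  · refine (hasDerivAt_sub_sq_mul_zero ?_).congr_of_eventuallyEq hderiv
    have := hk.differentiableAt two_ne_zero
    have := hk.differentiableAt_deriv
    fun_prop

theorem wenoM_eq_add_sub_pow_three_div {d ω : ℝ} (h : d ^ 2 + (1 - 2 * d) * ω ≠ 0) :
    ω * (d + d ^ 2 - 3 * d * ω + ω ^ 2) / (d ^ 2 + (1 - 2 * d) * ω)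
      = d + (ω - d) ^ 3 / (d ^ 2 + (1 - 2 * d) * ω) := by
  rw [add_div' _ _ _ h]
  ring

/-- For d ∈ (0,1), the WENO-M mapping function
`g(ω) = ω(d + d² − 3dω + ω²)/(d² + (1 − 2d)ω)` is twice differentiable at ω = d
with g′(d) = 0 and g″(d) = 0. -/
theorem wenoM_deriv_at_d (d : ℝ) (hd : d ∈ Set.Ioo (0:ℝ) 1)
    (g : ℝ → ℝ)
    (hg : ∀ ω : ℝ, g ω = ω * (d + d^2 - 3*d*ω + ω^2) / (d^2 + (1 - 2*d)*ω)) :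
    DifferentiableAt ℝ g d ∧ DifferentiableAt ℝ (deriv g) d ∧
    deriv g d = 0 ∧ deriv (deriv g) d = 0 := by
  obtain ⟨hd0, hd1⟩ := hd
  have hD : d ^ 2 + (1 - 2 * d) * d ≠ 0 := by nlinarith
  have hD_near : ∀ᶠ ω in 𝓝 d, d ^ 2 + (1 - 2 * d) * ω ≠ 0 :=
    (by fun_prop : Continuous fun ω : ℝ => d ^ 2 + (1 - 2 * d) * ω).continuousAt.eventually_ne hD
  have hg_near : g =ᶠ[𝓝 d] fun ω => d + (ω - d) ^ 3 * (d ^ 2 + (1 - 2 * d) * ω)⁻¹ := by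
    filter_upwards [hD_near] with ω hω
    rw [hg, wenoM_eq_add_sub_pow_three_div hω, div_eq_mul_inv]
  obtain ⟨hg', hg''⟩ := hasDerivAt_zero_of_eventuallyEq_const_add_sub_pow_three_mul
    ((by fun_prop : ContDiffAt ℝ 2 (fun ω : ℝ => d ^ 2 + (1 - 2 * d) * ω) d).inv hD) hg_near
  exact ⟨hg'.differentiableAt, hg''.differentiableAt, hg'.deriv, hg''.deriv⟩
end

section
/- Let d ∈ (0,1) and define the WENO-M mapping function g(ω) = ω(d + d² − 3dω + ω²)/(d² + (1 − 2d)ω) for ω ∈ [0,1]. Then g is monotone non-decreasing on [0,1]: for all ω₁, ω₂ ∈ [0,1] with ω₁ ≤ ω₂, one has g(ω₁) ≤ g(ω₂). -/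
/-!
Writing `D(ω) = d² + (1 - 2d)ω` for the denominator, `D` is the convex combination
`(1 - ω)d² + ω(1 - d)²`, hence positive on `[0, 1]`. Clearing denominators, `g b - g a` has the
sign of `(b - a) K(a, b)`, where, with `x = d - a` and `y = b - d`,
`K = x (x - y) D(b) + d(1 - d) y² = y (y - x) D(a) + d(1 - d) x²`.
According as `a + b ≤ 2d` or not, one of these two forms is a sum of nonnegative terms.
-/

namespace WenoM

variable {d a b ω : ℝ}

def num (d ω : ℝ) : ℝ := ω * (d + d^2 - 3*d*ω + ω^2)

def den (d ω : ℝ) : ℝ := d^2 + (1 - 2*d)*ω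

def cofactor (d a b : ℝ) : ℝ :=
  d*(1-d)*((d-a)^2 - (d-a)*(b-d) + (b-d)^2) - (1-2*d)*(d-a)*(b-d)*((b-d)-(d-a))

theorem den_eq_convex_comb (d ω : ℝ) : den d ω = (1 - ω) * d^2 + ω * (1 - d)^2 := by
  unfold den; ring

theorem den_pos (hd0 : 0 < d) (hd1 : d < 1) (hω : ω ∈ Set.Icc (0:ℝ) 1) : 0 < den d ω := by
  obtain ⟨hω0, hω1⟩ := hω
  rw [den_eq_convex_comb]
  rcases hω0.eq_or_lt with rfl | hω0
  · simpa using pow_pos hd0 2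
  · have : 0 < ω * (1 - d)^2 := mul_pos hω0 (pow_pos (sub_pos.2 hd1) 2)
    have : 0 ≤ (1 - ω) * d^2 := mul_nonneg (sub_nonneg.2 hω1) (sq_nonneg d)
    linarith

theorem num_mul_den_sub_num_mul_den (d a b : ℝ) :
    num d b * den d a - num d a * den d b = (b - a) * cofactor d a b := by
  unfold num den cofactor; ring

theorem cofactor_eq_left (d a b : ℝ) :
    cofactor d a b = (d - a) * (2*d - a - b) * den d b + d * (1 - d) * (b - d)^2 := by
  unfold cofactor den; ring

theorem cofactor_eq_right (d a b : ℝ) :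
    cofactor d a b = (b - d) * (a + b - 2*d) * den d a + d * (1 - d) * (d - a)^2 := by
  unfold cofactor den; ring

theorem cofactor_nonneg (hd0 : 0 ≤ d) (hd1 : d ≤ 1) (hab : a ≤ b)
    (ha : 0 ≤ den d a) (hb : 0 ≤ den d b) : 0 ≤ cofactor d a b := by
  have hd : 0 ≤ d * (1 - d) := mul_nonneg hd0 (sub_nonneg.2 hd1)
  rcases le_total (a + b) (2*d) with h | h
  · rw [cofactor_eq_left]
    have : 0 ≤ (d - a) * (2*d - a - b) := mul_nonneg (by linarith) (by linarith)
    positivity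
  · rw [cofactor_eq_right]
    have : 0 ≤ (b - d) * (a + b - 2*d) := mul_nonneg (by linarith) (by linarith)
    positivity

theorem monotoneOn (hd0 : 0 < d) (hd1 : d < 1) :
    MonotoneOn (fun ω => num d ω / den d ω) (Set.Icc 0 1) := by
  intro a ha b hb hab
  have hDa := den_pos hd0 hd1 ha
  have hDb := den_pos hd0 hd1 hb
  have hK := cofactor_nonneg hd0.le hd1.le hab hDa.le hDb.le
  rw [div_le_div_iff₀ hDa hDb]
  linarith [num_mul_den_sub_num_mul_den d a b, mul_nonneg (sub_nonneg.2 hab) hK]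

end WenoM

/-- For d ∈ (0,1), the WENO-M mapping function
`g(ω) = ω(d + d² − 3dω + ω²)/(d² + (1 − 2d)ω)` is monotone non-decreasing on [0,1]. -/
theorem wenoM_monotone (d : ℝ) (hd : d ∈ Set.Ioo (0:ℝ) 1)
    (g : ℝ → ℝ)
    (hg : ∀ ω : ℝ, g ω = ω * (d + d^2 - 3*d*ω + ω^2) / (d^2 + (1 - 2*d)*ω)) :
    ∀ ω₁ ∈ Set.Icc (0:ℝ) 1, ∀ ω₂ ∈ Set.Icc (0:ℝ) 1, ω₁ ≤ ω₂ → g ω₁ ≤ g ω₂ := by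
  have hg' : g = fun ω => WenoM.num d ω / WenoM.den d ω := funext hg
  subst hg'
  exact WenoM.monotoneOn hd.1 hd.2
end

section
/- Let d ∈ (0,1) and let k ≥ 2 be an integer. Define the WENO-PM mapping function g on [0,1] by g(ω) = c₁(ω − d)^{k+1}(ω + c₂) + d, where c₁ = (−1)^k (k+1)/d^{k+1} and c₂ = d/(k+1) for ω ∈ [0,d], and c₁ = −(k+1)/(1−d)^{k+1} and c₂ = (d − (k+2))/(k+1) for ω ∈ (d,1]. Then g is monotone non-decreasing on [0,1]: for all ω₁, ω₂ ∈ [0,1] with ω₁ ≤ ω₂, one has g(ω₁) ≤ g(ω₂). -/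
/-!
Each piece `c₁ (ω - d)^(k+1) (ω + c₂) + d` has derivative
`c₁ (ω - d)^k ((k+2) ω + (k+1) c₂ - d)`. The choice of `c₂` makes the last factor `(k+2) ω`
on the left piece and `-(k+2)(1 - ω)` on the right one, and the sign of `c₁` compensates the
sign of `(ω - d)^k`, so both derivatives are nonnegative on their intervals. Both pieces take
the value `d` at `d`, so they glue to a monotone function on `[0, 1]`.
-/

open Set

theorem MonotoneOn.Icc_ite_le {α β : Type*} [LinearOrder α] [Preorder β] {f h : α → β}
    {a b c : α} (hf : MonotoneOn f (Icc a b)) (hh : MonotoneOn h (Icc b c)) (hab : a ≤ b)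
    (hbc : b ≤ c) (hb : f b = h b) :
    MonotoneOn (fun x => if x ≤ b then f x else h x) (Icc a c) := by
  rw [← Icc_union_Icc_eq_Icc hab hbc]
  refine MonotoneOn.union_right ?_ ?_ (isGreatest_Icc hab) (isLeast_Icc hbc)
  · exact hf.congr fun x hx => (if_pos hx.2).symm
  · refine hh.congr fun x hx => ?_
    split_ifs with hxb
    · rw [le_antisymm hxb hx.1, hb]
    · rfl

def wenoPiece (c₁ c₂ d : ℝ) (k : ℕ) (ω : ℝ) : ℝ :=
  c₁ * (ω - d) ^ (k + 1) * (ω + c₂) + d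

section WenoPiece

variable (c₁ c₂ d : ℝ) (k : ℕ)

theorem wenoPiece_self : wenoPiece c₁ c₂ d k d = d := by
  simp [wenoPiece]

theorem hasDerivAt_wenoPiece (ω : ℝ) :
    HasDerivAt (wenoPiece c₁ c₂ d k)
      (c₁ * (ω - d) ^ k * ((k + 2) * ω + (k + 1) * c₂ - d)) ω := by
  have hpow : HasDerivAt (fun x => (x - d) ^ (k + 1)) ((k + 1 : ℕ) * (ω - d) ^ k) ω := by
    simpa using ((hasDerivAt_id ω).sub_const d).fun_pow (k + 1)
  have hprod := (hpow.const_mul c₁).fun_mul ((hasDerivAt_id' ω).add_const c₂)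
  refine (hprod.add_const d).congr_deriv ?_
  push_cast
  ring

theorem monotoneOn_wenoPiece {s : Set ℝ} (hs : Convex ℝ s)
    (hderiv : ∀ x ∈ interior s,
      0 ≤ c₁ * (x - d) ^ k * ((k + 2) * x + (k + 1) * c₂ - d)) :
    MonotoneOn (wenoPiece c₁ c₂ d k) s :=
  monotoneOn_of_deriv_nonneg hs
    (fun x _ => (hasDerivAt_wenoPiece c₁ c₂ d k x).continuousAt.continuousWithinAt)
    (fun x _ => (hasDerivAt_wenoPiece c₁ c₂ d k x).differentiableAt.differentiableWithinAt)
    (fun x hx => (hasDerivAt_wenoPiece c₁ c₂ d k x).deriv ▸ hderiv x hx)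

end WenoPiece

theorem monotoneOn_wenoPiece_left {d : ℝ} (hd : 0 < d) (k : ℕ) :
    MonotoneOn
      (wenoPiece ((-1 : ℝ) ^ k * ((k : ℝ) + 1) / d ^ (k + 1)) (d / ((k : ℝ) + 1)) d k)
      (Icc 0 d) := by
  refine monotoneOn_wenoPiece _ _ _ _ (convex_Icc 0 d) fun x hx => ?_
  rw [interior_Icc] at hx
  have hdx : 0 ≤ d - x := by linarith [hx.2]
  have hsign : (-1 : ℝ) ^ k * (x - d) ^ k = (d - x) ^ k := by rw [← mul_pow]; ring_nf
  calc (0 : ℝ) ≤ ((k : ℝ) + 1) / d ^ (k + 1) * (d - x) ^ k * ((k + 2) * x) := by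
        have := hx.1.le; positivity
    _ = _ := by rw [← hsign]; field_simp; ring

theorem monotoneOn_wenoPiece_right {d : ℝ} (hd : d < 1) (k : ℕ) :
    MonotoneOn
      (wenoPiece (-(((k : ℝ) + 1) / (1 - d) ^ (k + 1)))
        ((d - ((k : ℝ) + 2)) / ((k : ℝ) + 1)) d k)
      (Icc d 1) := by
  refine monotoneOn_wenoPiece _ _ _ _ (convex_Icc d 1) fun x hx => ?_
  rw [interior_Icc] at hx
  have hxd : 0 ≤ x - d := by linarith [hx.1]
  have h1x : 0 ≤ 1 - x := by linarith [hx.2]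
  have h1d : 0 < 1 - d := by linarith
  calc (0 : ℝ) ≤ ((k : ℝ) + 1) / (1 - d) ^ (k + 1) * (x - d) ^ k * ((k + 2) * (1 - x)) := by
        positivity
    _ = _ := by field_simp; ring

theorem wenoPM_monotone_general (d : ℝ) (hd : d ∈ Set.Ioo (0:ℝ) 1)
    (k : ℕ)
    (Pm Pp g : ℝ → ℝ)
    (hPm : ∀ ω : ℝ, Pm ω =
      ((-1:ℝ))^k * ((k:ℝ)+1) / d^(k+1) * (ω - d)^(k+1) * (ω + d/((k:ℝ)+1)) + d)
    (hPp : ∀ ω : ℝ, Pp ω =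
      (-(((k:ℝ)+1) / (1-d)^(k+1))) * (ω - d)^(k+1) * (ω + (d - ((k:ℝ)+2))/((k:ℝ)+1)) + d)
    (hg : ∀ ω : ℝ, g ω = if ω ≤ d then Pm ω else Pp ω) :
    ∀ ω₁ ∈ Set.Icc (0:ℝ) 1, ∀ ω₂ ∈ Set.Icc (0:ℝ) 1, ω₁ ≤ ω₂ → g ω₁ ≤ g ω₂ := by
  obtain ⟨hd0, hd1⟩ := hd
  obtain rfl : Pm = wenoPiece _ _ d k := funext hPm
  obtain rfl : Pp = wenoPiece _ _ d k := funext hPp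
  obtain rfl : g = fun ω => if ω ≤ d then _ else _ := funext hg
  exact (monotoneOn_wenoPiece_left hd0 k).Icc_ite_le (monotoneOn_wenoPiece_right hd1 k)
    hd0.le hd1.le (by rw [wenoPiece_self, wenoPiece_self])

/-- For d ∈ (0,1) and an integer k ≥ 2, the WENO-PM piecewise
polynomial mapping function is monotone non-decreasing on [0,1]. -/
theorem wenoPM_monotone (d : ℝ) (hd : d ∈ Set.Ioo (0:ℝ) 1)
    (k : ℕ) (hk : 2 ≤ k)
    (Pm Pp g : ℝ → ℝ)
    (hPm : ∀ ω : ℝ, Pm ω =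
      ((-1:ℝ))^k * ((k:ℝ)+1) / d^(k+1) * (ω - d)^(k+1) * (ω + d/((k:ℝ)+1)) + d)
    (hPp : ∀ ω : ℝ, Pp ω =
      (-(((k:ℝ)+1) / (1-d)^(k+1))) * (ω - d)^(k+1) * (ω + (d - ((k:ℝ)+2))/((k:ℝ)+1)) + d)
    (hg : ∀ ω : ℝ, g ω = if ω ≤ d then Pm ω else Pp ω) :
    ∀ ω₁ ∈ Set.Icc (0:ℝ) 1, ∀ ω₂ ∈ Set.Icc (0:ℝ) 1, ω₁ ≤ ω₂ → g ω₁ ≤ g ω₂ :=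
  wenoPM_monotone_general d hd k Pm Pp g hPm hPp hg
end

section
/- Let d ∈ (0,1), let A > 0, and let k be a positive even integer. The WENO-IM mapping function g(ω) = d + (ω − d)^{k+1} A / ((ω − d)^k A + ω(1 − ω)) is monotone non-decreasing on [0,1]: for all ω₁, ω₂ ∈ [0,1] with ω₁ ≤ ω₂, one has g(ω₁) ≤ g(ω₂). -/
/-!
With `x = ω - d` and `q(ω) = ω(1 - ω) ≥ 0`, clearing the positive denominators turns
`g ω₁ ≤ g ω₂` into `A² x₁ᵏ x₂ᵏ (x₁ - x₂) + A (x₁ᵏ⁺¹ q(ω₂) - x₂ᵏ⁺¹ q(ω₁)) ≤ 0`. The first term is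
nonpositive because `k` is even; the second because `ω ↦ (ω - d)ᵏ⁺¹ / q(ω)` is nondecreasing.
For `d ≤ ω` this is a product of the nonnegative nondecreasing factors `(ω - d) / ω` and
`(ω - d)ᵏ / (1 - ω)`; for `ω ≤ d` it follows by the symmetry `ω ↦ 1 - ω`, `d ↦ 1 - d`, as
`k + 1` is odd; across `d` the sign changes from `-` to `+`.
-/

lemma sub_pow_succ_mul_mul_one_sub_le_of_le (k : ℕ) {a b d : ℝ} (hd : 0 ≤ d) (hda : d ≤ a)
    (hab : a ≤ b) (hb : b ≤ 1) :
    (a - d) ^ (k + 1) * (b * (1 - b)) ≤ (b - d) ^ (k + 1) * (a * (1 - a)) :=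
  calc (a - d) ^ (k + 1) * (b * (1 - b)) = ((a - d) * b) * ((a - d) ^ k * (1 - b)) := by ring
    _ ≤ ((b - d) * a) * ((b - d) ^ k * (1 - a)) := by
      apply mul_le_mul (by nlinarith) _ (by positivity) (by nlinarith)
      exact mul_le_mul (pow_le_pow_left₀ (by linarith) (by linarith) k) (by linarith)
        (by linarith) (pow_nonneg (by linarith) k)
    _ = (b - d) ^ (k + 1) * (a * (1 - a)) := by ring

lemma Even.sub_pow_succ_mul_mul_one_sub_le {k : ℕ} (hk : Even k) {a b d : ℝ}
    (hd : d ∈ Set.Icc (0 : ℝ) 1) (ha : 0 ≤ a) (hab : a ≤ b) (hb : b ≤ 1) :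
    (a - d) ^ (k + 1) * (b * (1 - b)) ≤ (b - d) ^ (k + 1) * (a * (1 - a)) := by
  obtain ⟨hd₀, hd₁⟩ := hd
  rcases le_total d a with hda | had
  · exact sub_pow_succ_mul_mul_one_sub_le_of_le k hd₀ hda hab hb
  rcases le_total d b with hdb | hbd
  · calc (a - d) ^ (k + 1) * (b * (1 - b)) ≤ 0 :=
          mul_nonpos_of_nonpos_of_nonneg (hk.add_one.pow_nonpos (by linarith)) (by nlinarith)
      _ ≤ (b - d) ^ (k + 1) * (a * (1 - a)) :=
          mul_nonneg (pow_nonneg (by linarith) _) (by nlinarith)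
  · have hmirror := sub_pow_succ_mul_mul_one_sub_le_of_le k (d := 1 - d) (a := 1 - b) (b := 1 - a)
      (by linarith) (by linarith) (by linarith) (by linarith)
    rw [show 1 - b - (1 - d) = -(b - d) by ring, show 1 - a - (1 - d) = -(a - d) by ring,
      hk.add_one.neg_pow, hk.add_one.neg_pow] at hmirror
    linear_combination hmirror

lemma Even.pow_sub_mul_add_mul_one_sub_pos {k : ℕ} (hk : Even k) {A d ω : ℝ} (hA : 0 < A)
    (hd : d ∈ Set.Ioo (0 : ℝ) 1) (hω : ω ∈ Set.Icc (0 : ℝ) 1) :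
    0 < (ω - d) ^ k * A + ω * (1 - ω) := by
  obtain ⟨hd₀, hd₁⟩ := hd
  obtain ⟨hω₀, hω₁⟩ := hω
  rcases eq_or_ne ω d with rfl | hne
  · nlinarith [hk.pow_nonneg (ω - ω)]
  · nlinarith [hk.pow_pos (sub_ne_zero.mpr hne)]

lemma pow_succ_mul_div_pow_mul_add_le {k : ℕ} (hk : Even k) {A x₁ x₂ q₁ q₂ : ℝ}
    (hA : 0 ≤ A) (hx : x₁ ≤ x₂) (hD₁ : 0 < x₁ ^ k * A + q₁) (hD₂ : 0 < x₂ ^ k * A + q₂)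
    (hq : x₁ ^ (k + 1) * q₂ ≤ x₂ ^ (k + 1) * q₁) :
    x₁ ^ (k + 1) * A / (x₁ ^ k * A + q₁) ≤ x₂ ^ (k + 1) * A / (x₂ ^ k * A + q₂) := by
  rw [div_le_div_iff₀ hD₁ hD₂]
  have hpow : A ^ 2 * x₁ ^ k * x₂ ^ k * x₁ ≤ A ^ 2 * x₁ ^ k * x₂ ^ k * x₂ :=
    mul_le_mul_of_nonneg_left hx
      (mul_nonneg (mul_nonneg (sq_nonneg A) (hk.pow_nonneg _)) (hk.pow_nonneg _))
  linear_combination hpow + mul_le_mul_of_nonneg_left hq hA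

theorem wenoIM_monotone_general (d : ℝ) (hd : d ∈ Set.Ioo (0:ℝ) 1)
    (A : ℝ) (hA : 0 < A) (k : ℕ) (hke : Even k)
    (g : ℝ → ℝ)
    (hg : ∀ ω : ℝ, g ω = d + (ω - d)^(k+1) * A / ((ω - d)^k * A + ω*(1 - ω))) :
    ∀ ω₁ ∈ Set.Icc (0:ℝ) 1, ∀ ω₂ ∈ Set.Icc (0:ℝ) 1, ω₁ ≤ ω₂ → g ω₁ ≤ g ω₂ := by
  intro ω₁ hω₁ ω₂ hω₂ h₁₂
  rw [hg, hg]
  gcongr d + ?_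
  exact pow_succ_mul_div_pow_mul_add_le hke hA.le (by linarith)
    (hke.pow_sub_mul_add_mul_one_sub_pos hA hd hω₁)
    (hke.pow_sub_mul_add_mul_one_sub_pos hA hd hω₂)
    (hke.sub_pow_succ_mul_mul_one_sub_le (Set.Ioo_subset_Icc_self hd) hω₁.1 h₁₂ hω₂.2)

/-- For d ∈ (0,1), A > 0 and a positive even integer k, the WENO-IM
mapping function `g(ω) = d + (ω − d)^{k+1} A / ((ω − d)^k A + ω(1 − ω))` is
monotone non-decreasing on [0,1]. -/
theorem wenoIM_monotone (d : ℝ) (hd : d ∈ Set.Ioo (0:ℝ) 1)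
    (A : ℝ) (hA : 0 < A) (k : ℕ) (hk : 0 < k) (hke : Even k)
    (g : ℝ → ℝ)
    (hg : ∀ ω : ℝ, g ω = d + (ω - d)^(k+1) * A / ((ω - d)^k * A + ω*(1 - ω))) :
    ∀ ω₁ ∈ Set.Icc (0:ℝ) 1, ∀ ω₂ ∈ Set.Icc (0:ℝ) 1, ω₁ ≤ ω₂ → g ω₁ ≤ g ω₂ :=
  wenoIM_monotone_general d hd A hA k hke g hg
end

section
/- Let d ∈ (0,1), A > 0, and let k be a positive even integer. The WENO-IM mapping function g(ω) = d + (ω − d)^{k+1} A / ((ω − d)^k A + ω(1 − ω)) is (k+1)-times differentiable at ω = d, its derivatives of orders 1 through k all vanish at ω = d, and its (k+1)-th derivative at ω = d equals (k+1)! · A/(d(1 − d)), which is nonzero. -/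
open Set

lemma iteratedDerivWithin_of_isOpen' {n : ℕ} {f : ℝ → ℝ} {s : Set ℝ} {x : ℝ}
    (hs : IsOpen s) (hx : x ∈ s) :
    iteratedDerivWithin n f s x = iteratedDeriv n f x := by
  rw [iteratedDerivWithin, iteratedDeriv, iteratedFDerivWithin_of_isOpen n hs hx]

/-- Key lemma: iterated derivatives of (x-d)^n * φ x at d. -/
lemma key (d : ℝ) {U : Set ℝ} (hU : IsOpen U) (hdU : d ∈ U) :
    ∀ n : ℕ, ∀ φ : ℝ → ℝ, ContDiffOn ℝ (⊤ : ℕ∞) φ U → ∀ j : ℕ, j ≤ n →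
      iteratedDerivWithin j (fun x => (x - d)^n * φ x) U d
        = if j = n then (n.factorial : ℝ) * φ d else 0 := by
  have hUD : UniqueDiffOn ℝ U := hU.uniqueDiffOn
  intro n
  induction n with
  | zero =>
    intro φ hφ j hj
    interval_cases j
    simp [iteratedDerivWithin_zero]
  | succ n IH =>
    intro φ hφ j hj
    set ψ : ℝ → ℝ := fun x => (n+1 : ℝ) * φ x + (x - d) * derivWithin φ U x with hψdef
    have hψ : ContDiffOn ℝ (⊤ : ℕ∞) ψ U := by
      have hd' : ContDiffOn ℝ (⊤ : ℕ∞) (derivWithin φ U) U := hφ.derivWithin hUD (mod_cast le_top)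
      exact (contDiffOn_const.mul hφ).add
        (((contDiffOn_id.sub contDiffOn_const)).mul hd')
    have hderiv : ∀ x ∈ U, derivWithin (fun x => (x - d)^(n+1) * φ x) U x
        = (x - d)^n * ψ x := by
      intro x hx
      have hφx : DifferentiableAt ℝ φ x :=
        (hφ.contDiffAt (hU.mem_nhds hx)).differentiableAt (by simp)
      rw [derivWithin_of_isOpen hU hx]
      have h1 : HasDerivAt (fun x => (x - d)^(n+1) * φ x)
          (((n+1 : ℕ) * (x - d)^n * 1) * φ x + (x - d)^(n+1) * deriv φ x) x := by
        exact (((hasDerivAt_id x).sub_const d).pow (n+1)).mul hφx.hasDerivAt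
      rw [h1.deriv]
      simp only [hψdef, derivWithin_of_isOpen hU hx]
      push_cast
      ring
    cases j with
    | zero =>
      simp [iteratedDerivWithin_zero]
    | succ m =>
      have hm : m ≤ n := Nat.succ_le_succ_iff.mp hj
      rw [iteratedDerivWithin_succ']
      have hcongr := iteratedDerivWithin_congr
        (f := derivWithin (fun x => (x - d)^(n+1) * φ x) U)
        (g := fun x => (x - d)^n * ψ x) (fun x hx => hderiv x hx) (n := m) hdU
      rw [hcongr, IH ψ hψ m hm]
      have : ψ d = (n+1 : ℝ) * φ d := by simp [hψdef]
      rcases eq_or_ne m n with rfl | hne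
      · simp [this, Nat.factorial_succ]; ring
      · simp [hne, fun h => hne (Nat.succ_injective h)]

/-- For d ∈ (0,1), A > 0 and a positive even integer k, the WENO-IM
mapping function is (k+1)-times differentiable at ω = d, its derivatives of
orders 1 through k vanish at ω = d, and its (k+1)-th derivative at ω = d equals
(k+1)! · A/(d(1 − d)), which is nonzero. -/
theorem wenoIM_derivs_at_d (d : ℝ) (hd : d ∈ Set.Ioo (0:ℝ) 1)
    (A : ℝ) (hA : 0 < A) (k : ℕ) (hk : 0 < k) (hke : Even k)
    (g : ℝ → ℝ)
    (hg : ∀ ω : ℝ, g ω = d + (ω - d)^(k+1) * A / ((ω - d)^k * A + ω*(1 - ω))) :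
    ContDiffAt ℝ (k+1 : ℕ) g d ∧
    (∀ j : ℕ, 1 ≤ j → j ≤ k → iteratedDeriv j g d = 0) ∧
    iteratedDeriv (k+1) g d = (Nat.factorial (k+1) : ℝ) * A / (d * (1 - d)) ∧
    iteratedDeriv (k+1) g d ≠ 0 := by
  obtain ⟨hd0, hd1⟩ := hd
  set h : ℝ → ℝ := fun x => (x - d)^k * A + x*(1 - x) with hh
  have hhd : h d = d * (1 - d) := by simp [hh, zero_pow hk.ne']
  have hdpos : 0 < d * (1 - d) := mul_pos hd0 (by linarith)
  have hhC : ContDiff ℝ (⊤ : ℕ∞) h := by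
    apply ContDiff.add
    · exact ((contDiff_id.sub contDiff_const).pow k).mul contDiff_const
    · exact contDiff_id.mul (contDiff_const.sub contDiff_id)
  set U : Set ℝ := {x | h x ≠ 0} with hUdef
  have hU : IsOpen U := isOpen_ne.preimage hhC.continuous
  have hdU : d ∈ U := by show h d ≠ 0; rw [hhd]; exact ne_of_gt hdpos
  have hUD : UniqueDiffOn ℝ U := hU.uniqueDiffOn
  set φ : ℝ → ℝ := fun x => A / h x with hφdef
  have hφ : ContDiffOn ℝ (⊤ : ℕ∞) φ U := contDiffOn_const.div hhC.contDiffOn (fun x hx => hx)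
  have hgeq : ∀ x, g x = d + (x - d)^(k+1) * φ x := by
    intro x
    rw [hg x, hφdef, hh, mul_div_assoc]
  have hφd : φ d = A / (d * (1 - d)) := by show A / h d = _; rw [hhd]
  have hgC : ContDiffOn ℝ (⊤ : ℕ∞) g U := by
    refine ContDiffOn.congr ?_ (fun x _ => hgeq x)
    exact contDiffOn_const.add
      (((contDiffOn_id.sub contDiffOn_const).pow (k+1)).mul hφ)
  have hval : ∀ j : ℕ, 1 ≤ j → j ≤ k + 1 →
      iteratedDeriv j g d = if j = k + 1 then ((k+1).factorial : ℝ) * φ d else 0 := by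
    intro j hj1 hjk
    rw [← iteratedDerivWithin_of_isOpen' hU hdU,
      iteratedDerivWithin_congr (fun x _ => hgeq x) hdU,
      iteratedDerivWithin_const_add hj1 d,
      key d hU hdU (k+1) φ hφ j hjk]
  refine ⟨(hgC.contDiffAt (hU.mem_nhds hdU)).of_le (mod_cast le_top), ?_, ?_, ?_⟩
  · intro j hj1 hjk
    rw [hval j hj1 (hjk.trans (Nat.le_succ k))]
    simp [Nat.ne_of_lt (Nat.lt_succ_of_le hjk)]
  · rw [hval (k+1) (Nat.succ_le_succ (Nat.zero_le k)) le_rfl]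
    simp [hφd, mul_div_assoc]
  · rw [hval (k+1) (Nat.succ_le_succ (Nat.zero_le k)) le_rfl]
    simp only [if_pos rfl, hφd]
    exact ne_of_gt (mul_pos (by positivity) (div_pos hA hdpos))
end

section
/- Let d ∈ (0,1), A > 0, and let k be a positive even integer. The WENO-IM mapping function g(ω) = d + (ω − d)^{k+1} A / ((ω − d)^k A + ω(1 − ω)) is differentiable at ω = 0 with g′(0) = 1 + 1/(A d^{k−1}). -/
/-!
By the quotient rule. At `ω = 0` the denominator is `d ^ k * A > 0` because `k` is even, and the
odd powers `(-d) ^ (k + 1)`, `(-d) ^ (k - 1)` change sign; after clearing denominators the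
derivative collapses to `1 + d ^ (k + 1) * A / (d ^ k * A) ^ 2 = 1 + 1 / (A * d ^ (k - 1))`.
-/

noncomputable section WenoIM

variable (d A : ℝ) (k : ℕ)

def wenoIMDenom (ω : ℝ) : ℝ := (ω - d) ^ k * A + ω * (1 - ω)

def wenoIM (ω : ℝ) : ℝ := d + (ω - d) ^ (k + 1) * A / wenoIMDenom d A k ω

theorem hasDerivAt_wenoIMDenom (ω : ℝ) :
    HasDerivAt (wenoIMDenom d A k) (k * (ω - d) ^ (k - 1) * A + (1 - 2 * ω)) ω := by
  have hpow := (((hasDerivAt_id' ω).sub_const d).pow k).mul_const A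
  have hquad := (hasDerivAt_id' ω).mul ((hasDerivAt_const ω (1 : ℝ)).sub (hasDerivAt_id' ω))
  exact (hpow.add hquad).congr_deriv (by simp only [Pi.sub_apply]; ring)

theorem hasDerivAt_wenoIM {ω : ℝ} (hω : wenoIMDenom d A k ω ≠ 0) :
    HasDerivAt (wenoIM d A k)
      (((k + 1) * (ω - d) ^ k * A * wenoIMDenom d A k ω
        - (ω - d) ^ (k + 1) * A * (k * (ω - d) ^ (k - 1) * A + (1 - 2 * ω)))
        / wenoIMDenom d A k ω ^ 2) ω := by
  have hnum := (((hasDerivAt_id' ω).sub_const d).pow (k + 1)).mul_const A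
  exact ((hnum.div (hasDerivAt_wenoIMDenom d A k ω) hω).const_add d).congr_deriv
    (by simp only [Pi.pow_apply, Nat.add_sub_cancel]; push_cast; ring)

theorem wenoIMDenom_zero_of_even (hk : Even k) : wenoIMDenom d A k 0 = d ^ k * A := by
  simp [wenoIMDenom, hk.neg_pow]

end WenoIM

/-- For d ∈ (0,1), A > 0 and a positive even integer k, the WENO-IM
mapping function is differentiable at ω = 0 with g′(0) = 1 + 1/(A d^{k−1}). -/
theorem wenoIM_deriv_at_zero (d : ℝ) (hd : d ∈ Set.Ioo (0:ℝ) 1)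
    (A : ℝ) (hA : 0 < A) (k : ℕ) (hk : 0 < k) (hke : Even k)
    (g : ℝ → ℝ)
    (hg : ∀ ω : ℝ, g ω = d + (ω - d)^(k+1) * A / ((ω - d)^k * A + ω*(1 - ω))) :
    HasDerivAt g (1 + 1/(A * d^(k-1))) 0 := by
  obtain rfl : g = wenoIM d A k := funext hg
  have hd0 : 0 < d := hd.1
  have hD := wenoIMDenom_zero_of_even d A k hke
  have hD0 : wenoIMDenom d A k 0 ≠ 0 := hD ▸ by positivity
  convert hasDerivAt_wenoIM d A k hD0 using 1
  obtain ⟨n, rfl⟩ : ∃ n, k = n + 1 := Nat.exists_eq_add_one.mpr hk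
  have hn : Odd n := by simpa [Nat.even_add_one] using hke
  rw [hD, zero_sub, (hke.add_one).neg_pow, hke.neg_pow, Nat.add_sub_cancel, hn.neg_pow]
  field_simp
  ring
end

section
/- Let r ≥ 2, let 0 < d̃₀ < d̃₁ < ⋯ < d̃_{r−1} < 1, let CFS₀ ∈ (0, d̃₀], CFS₁ ∈ [d̃_{r−1}, 1), k₀ ∈ [0, d̃₀/CFS₀], and k₁ ∈ [0, (1 − d̃_{r−1})/(1 − CFS₁)]. Define the MOP-WENO-ACMk mapping function g on [0,1] by g(ω) = k₀ω for ω ∈ [0, CFS₀); g(ω) = d̃₀ for ω ∈ [CFS₀, (d̃₀+d̃₁)/2); g(ω) = d̃_i for ω ∈ [(d̃_{i−1}+d̃_i)/2, (d̃_i+d̃_{i+1})/2) for each 1 ≤ i ≤ r−2; g(ω) = d̃_{r−1} for ω ∈ [(d̃_{r−2}+d̃_{r−1})/2, CFS₁]; and g(ω) = 1 − k₁(1 − ω) for ω ∈ (CFS₁, 1]. Then g is monotone non-decreasing on [0,1]; consequently the family of identical mapping functions g_s = g (s = 0,…,r−1) is order-preserving: for all ω_a, ω_b ∈ [0,1] with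 ω_a ≥ ω_b and all indices m, n, one has g_m(ω_a) ≥ g_n(ω_b). -/
/-!
On `[CFS₀, CFS₁]` the mapping function is a step function: a point `ω` lies on the step of
the largest index `i` whose left end is `≤ ω`, and that index grows with `ω`, so the sorted
values `d̃ᵢ` are taken in non-decreasing order. The two linear pieces are non-decreasing because
`k₀, k₁ ≥ 0`, and the bounds on `k₀, k₁` say exactly that they stay below `d̃₀` at `CFS₀` and
above `d̃_{r−1}` at `CFS₁`, so the three monotone pieces glue at their common endpoints.
-/

open Set

variable {α β : Type*}

lemma monotoneOn_Iic_of_le_succ [Preorder α] {v : ℕ → α} {n : ℕ}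
    (hv : ∀ i < n, v i ≤ v (i + 1)) : MonotoneOn v (Iic n) :=
  monotoneOn_of_le_succ ordConnected_Iic fun i _ _ hi => by
    rw [Order.succ_eq_add_one] at hi ⊢
    exact hv i hi

lemma MonotoneOn.Icc_of_Ico [PartialOrder α] [Preorder β] {f : α → β} {a c : α}
    (hac : a ≤ c) (hf : MonotoneOn f (Ico a c)) (hc : ∀ x ∈ Ico a c, f x ≤ f c) :
    MonotoneOn f (Icc a c) := by
  rw [← Ico_insert_right hac, monotoneOn_insert_iff]
  exact ⟨fun x hx _ => hc x hx, fun x hx h => absurd hx.2 h.not_gt, hf⟩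

lemma MonotoneOn.Icc_of_Ioc [PartialOrder α] [Preorder β] {f : α → β} {a c : α}
    (hac : a ≤ c) (hf : MonotoneOn f (Ioc a c)) (ha : ∀ x ∈ Ioc a c, f a ≤ f x) :
    MonotoneOn f (Icc a c) := by
  rw [← Ioc_insert_left hac, monotoneOn_insert_iff]
  exact ⟨fun x hx h => absurd hx.1 h.not_gt, fun x hx _ => ha x hx, hf⟩

lemma MonotoneOn.Icc_union_Icc [LinearOrder α] [Preorder β] {f : α → β} {a b c : α}
    (hab : a ≤ b) (hbc : b ≤ c) (h₁ : MonotoneOn f (Icc a b)) (h₂ : MonotoneOn f (Icc b c)) :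
    MonotoneOn f (Icc a c) :=
  Icc_union_Icc_eq_Icc hab hbc ▸ h₁.union_right h₂ (isGreatest_Icc hab) (isLeast_Icc hbc)

lemma monotoneOn_Icc_of_steps [LinearOrder α] [Preorder β] {f : α → β} {b : ℕ → α}
    {v : ℕ → β} {n : ℕ} {c : α} (hv : MonotoneOn v (Iic n))
    (hstep : ∀ i < n, ∀ x, b i ≤ x → x < b (i + 1) → f x = v i)
    (hlast : ∀ x, b n ≤ x → x ≤ c → f x = v n) :
    MonotoneOn f (Icc (b 0) c) := by
  classical
  let step (x : α) : ℕ := Nat.findGreatest (fun i => b i ≤ x) n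
  have step_mono : Monotone step := fun x y hxy =>
    Nat.findGreatest_mono_left (fun _ hi => hi.trans hxy) n
  have f_eq_step : ∀ x ∈ Icc (b 0) c, f x = v (step x) := by
    rintro x ⟨h0, hc⟩
    have hle : b (step x) ≤ x := Nat.findGreatest_spec (P := (b · ≤ x)) n.zero_le h0
    obtain hlt | heq := (show step x ≤ n from Nat.findGreatest_le n).lt_or_eq
    · exact hstep _ hlt x hle
        (not_le.mp (Nat.findGreatest_is_greatest (Nat.lt_succ_self _) hlt))
    · rw [heq] at hle ⊢
      exact hlast x hle hc
  intro x hx y hy hxy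
  rw [f_eq_step x hx, f_eq_step y hy]
  exact hv (Nat.findGreatest_le n) (Nat.findGreatest_le n) (step_mono hxy)

theorem mopWenoACMk_monotone_order_preserving_general
    (r : ℕ) (hr : 2 ≤ r) (dt : ℕ → ℝ)
    (hdtmono : ∀ i : ℕ, i + 1 ≤ r - 1 → dt i < dt (i+1))
    (CFS0 CFS1 k0 k1 : ℝ)
    (hCFS0 : 0 < CFS0) (hCFS0' : CFS0 ≤ dt 0)
    (hCFS1 : dt (r-1) ≤ CFS1) (hCFS1' : CFS1 < 1)
    (hk0 : 0 ≤ k0) (hk0' : k0 ≤ dt 0 / CFS0)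
    (hk1 : 0 ≤ k1) (hk1' : k1 ≤ (1 - dt (r-1)) / (1 - CFS1))
    (g : ℝ → ℝ)
    (hg1 : ∀ ω : ℝ, 0 ≤ ω → ω < CFS0 → g ω = k0 * ω)
    (hg2 : ∀ ω : ℝ, CFS0 ≤ ω → ω < (dt 0 + dt 1)/2 → g ω = dt 0)
    (hg3 : ∀ i : ℕ, 1 ≤ i → i ≤ r - 2 →
      ∀ ω : ℝ, (dt (i-1) + dt i)/2 ≤ ω → ω < (dt i + dt (i+1))/2 → g ω = dt i)
    (hg4 : ∀ ω : ℝ, (dt (r-2) + dt (r-1))/2 ≤ ω → ω ≤ CFS1 → g ω = dt (r-1))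
    (hg5 : ∀ ω : ℝ, CFS1 < ω → ω ≤ 1 → g ω = 1 - k1 * (1 - ω))
    (gs : Fin r → ℝ → ℝ) (hgs : ∀ s : Fin r, gs s = g) :
    (∀ ω₁ ∈ Set.Icc (0:ℝ) 1, ∀ ω₂ ∈ Set.Icc (0:ℝ) 1, ω₁ ≤ ω₂ → g ω₁ ≤ g ω₂) ∧
    (∀ m n : Fin r, ∀ ωa ∈ Set.Icc (0:ℝ) 1, ∀ ωb ∈ Set.Icc (0:ℝ) 1,
      ωb ≤ ωa → gs n ωb ≤ gs m ωa) := by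
  obtain ⟨p, rfl⟩ := Nat.exists_eq_add_of_le' hr
  simp only [Nat.add_sub_cancel, show p + 2 - 1 = p + 1 from rfl] at *
  have hdt : MonotoneOn dt (Iic (p + 1)) :=
    monotoneOn_Iic_of_le_succ fun i hi => (hdtmono i hi).le
  have hk0CFS0 : k0 * CFS0 ≤ dt 0 := (le_div_iff₀ hCFS0).mp hk0'
  have hk1CFS1 : k1 * (1 - CFS1) ≤ 1 - dt (p + 1) := (le_div_iff₀ (sub_pos.2 hCFS1')).mp hk1'
  have hgCFS0 : g CFS0 = dt 0 := hg2 _ le_rfl (by linarith [hdtmono 0 (by omega)])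
  have hgCFS1 : g CFS1 = dt (p + 1) := hg4 _ (by linarith [hdtmono p le_rfl]) le_rfl
  have left : MonotoneOn g (Icc 0 CFS0) := by
    refine MonotoneOn.Icc_of_Ico hCFS0.le (fun x hx y hy hxy => ?_) fun x hx => ?_
    · rw [hg1 x hx.1 hx.2, hg1 y hy.1 hy.2]
      gcongr
    · rw [hg1 x hx.1 hx.2, hgCFS0]
      nlinarith [hx.2]
  have middle : MonotoneOn g (Icc CFS0 CFS1) := by
    refine monotoneOn_Icc_of_steps (b := fun | 0 => CFS0 | i + 1 => (dt i + dt (i + 1)) / 2)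
      hdt ?_ (hg4 · · ·)
    rintro (_ | i) hi x hlo hhi
    · exact hg2 x hlo hhi
    · exact hg3 (i + 1) (by omega) (by omega) x hlo hhi
  have right : MonotoneOn g (Icc CFS1 1) := by
    refine MonotoneOn.Icc_of_Ioc hCFS1'.le (fun x hx y hy hxy => ?_) fun x hx => ?_
    · rw [hg5 x hx.1 hx.2, hg5 y hy.1 hy.2]
      gcongr
    · rw [hg5 x hx.1 hx.2, hgCFS1]
      nlinarith [hx.1]
  have hCFS01 : CFS0 ≤ CFS1 := by
    linarith [hdt (mem_Iic.2 (Nat.zero_le _)) self_mem_Iic (Nat.zero_le (p + 1))]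
  have mono : MonotoneOn g (Icc 0 1) :=
    (left.Icc_union_Icc hCFS0.le hCFS01 middle).Icc_union_Icc (hCFS0.le.trans hCFS01)
      hCFS1'.le right
  exact ⟨fun x hx y hy hxy => mono hx hy hxy,
    fun _ _ a ha b hb hba => by simpa only [hgs] using mono hb ha hba⟩

/-- The MOP-WENO-ACMk mapping function g (built from the sorted
ideal weights d̃₀ < ⋯ < d̃_{r−1}, thresholds CFS₀, CFS₁ and slopes k₀, k₁) is
monotone non-decreasing on [0,1]; consequently the family of identical mapping
functions g_s = g (s = 0,…,r−1) is order-preserving: ω_a ≥ ω_b implies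
g_m(ω_a) ≥ g_n(ω_b) for all indices m, n. -/
theorem mopWenoACMk_monotone_order_preserving
    (r : ℕ) (hr : 2 ≤ r) (dt : ℕ → ℝ)
    (hdt0 : 0 < dt 0) (hdtr : dt (r-1) < 1)
    (hdtmono : ∀ i : ℕ, i + 1 ≤ r - 1 → dt i < dt (i+1))
    (CFS0 CFS1 k0 k1 : ℝ)
    (hCFS0 : 0 < CFS0) (hCFS0' : CFS0 ≤ dt 0)
    (hCFS1 : dt (r-1) ≤ CFS1) (hCFS1' : CFS1 < 1)
    (hk0 : 0 ≤ k0) (hk0' : k0 ≤ dt 0 / CFS0)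
    (hk1 : 0 ≤ k1) (hk1' : k1 ≤ (1 - dt (r-1)) / (1 - CFS1))
    (g : ℝ → ℝ)
    (hg1 : ∀ ω : ℝ, 0 ≤ ω → ω < CFS0 → g ω = k0 * ω)
    (hg2 : ∀ ω : ℝ, CFS0 ≤ ω → ω < (dt 0 + dt 1)/2 → g ω = dt 0)
    (hg3 : ∀ i : ℕ, 1 ≤ i → i ≤ r - 2 →
      ∀ ω : ℝ, (dt (i-1) + dt i)/2 ≤ ω → ω < (dt i + dt (i+1))/2 → g ω = dt i)
    (hg4 : ∀ ω : ℝ, (dt (r-2) + dt (r-1))/2 ≤ ω → ω ≤ CFS1 → g ω = dt (r-1))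
    (hg5 : ∀ ω : ℝ, CFS1 < ω → ω ≤ 1 → g ω = 1 - k1 * (1 - ω))
    (gs : Fin r → ℝ → ℝ) (hgs : ∀ s : Fin r, gs s = g) :
    (∀ ω₁ ∈ Set.Icc (0:ℝ) 1, ∀ ω₂ ∈ Set.Icc (0:ℝ) 1, ω₁ ≤ ω₂ → g ω₁ ≤ g ω₂) ∧
    (∀ m n : Fin r, ∀ ωa ∈ Set.Icc (0:ℝ) 1, ∀ ωb ∈ Set.Icc (0:ℝ) 1,
      ωb ≤ ωa → gs n ωb ≤ gs m ωa) :=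
  mopWenoACMk_monotone_order_preserving_general r hr dt hdtmono CFS0 CFS1 k0 k1 hCFS0 hCFS0' hCFS1
    hCFS1' hk0 hk0' hk1 hk1' g hg1 hg2 hg3 hg4 hg5 gs hgs
end

section
/- Let f : ℝ → ℝ be five times continuously differentiable and fix x ∈ ℝ. For h > 0 define the cell averages ū_i(h) = (1/h)∫_{x+(i−1/2)h}^{x+(i+1/2)h} f(t) dt for integers i, and the three substencil reconstructions u⁰(h) = (2ū_{−2}(h) − 7ū_{−1}(h) + 11ū₀(h))/6, u¹(h) = (−ū_{−1}(h) + 5ū₀(h) + 2ū₁(h))/6, u²(h) = (2ū₀(h) + 5ū₁(h) − ū₂(h))/6. Then the combination with the ideal weights d₀ = 1/10, d₁ = 6/10, d₂ = 3/10 is fifth-order accurate: (1/10)u⁰(h) + (6/10)u¹(h) + (3/10)u²(h) − f(x + h/2) = O(h⁵) as h → 0⁺. -/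
/-!
The ideal combination is a linear functional of `g` that only sees `g` on the stencil
`[x - 5h/2, x + 5h/2]`, where it is bounded by `3 * sup |g|`. The ideal weights make it exact
on polynomials of degree at most four, and on `(t - x)^5` its error is `-2 h^5`. Splitting `f`
into its Taylor polynomial of degree five at `x` and a remainder that is `O((t - x)^5)` therefore
gives an error of order `h^5`.
-/

open Asymptotics Filter Topology Nat

noncomputable def cellAverage (g : ℝ → ℝ) (x h : ℝ) (i : ℤ) : ℝ :=
  (1/h) * ∫ t in (x + ((i:ℝ) - 1/2)*h)..(x + ((i:ℝ) + 1/2)*h), g t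

noncomputable def wenoIdealError (g : ℝ → ℝ) (x h : ℝ) : ℝ :=
  let ū := cellAverage g x h
  (1/10) * ((2 * ū (-2) - 7 * ū (-1) + 11 * ū 0) / 6)
    + (6/10) * ((-(ū (-1)) + 5 * ū 0 + 2 * ū 1) / 6)
    + (3/10) * ((2 * ū 0 + 5 * ū 1 - ū 2) / 6)
    - g (x + h/2)

lemma cellAverage_add {g₁ g₂ : ℝ → ℝ} (hg₁ : Continuous g₁) (hg₂ : Continuous g₂)
    (x h : ℝ) (i : ℤ) :
    cellAverage (g₁ + g₂) x h i = cellAverage g₁ x h i + cellAverage g₂ x h i := by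
  rw [cellAverage, cellAverage, cellAverage, Pi.add_def,
    intervalIntegral.integral_add (hg₁.intervalIntegrable _ _) (hg₂.intervalIntegrable _ _),
    mul_add]

lemma wenoIdealError_add {g₁ g₂ : ℝ → ℝ} (hg₁ : Continuous g₁) (hg₂ : Continuous g₂)
    (x h : ℝ) :
    wenoIdealError (g₁ + g₂) x h = wenoIdealError g₁ x h + wenoIdealError g₂ x h := by
  simp only [wenoIdealError, cellAverage_add hg₁ hg₂, Pi.add_apply]
  ring

lemma cellAverage_pow_sub (x : ℝ) {h : ℝ} (hh : h ≠ 0) (i : ℤ) (k : ℕ) :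
    cellAverage (fun t => (t - x) ^ k) x h i =
      h ^ k * (((i:ℝ) + 1/2) ^ (k + 1) - ((i:ℝ) - 1/2) ^ (k + 1)) / (k + 1) := by
  rw [cellAverage, intervalIntegral.integral_comp_sub_right (fun t => t ^ k), integral_pow,
    add_sub_cancel_left, add_sub_cancel_left, mul_pow, mul_pow]
  field_simp
  ring

lemma cellAverage_polynomial (x : ℝ) {h : ℝ} (hh : h ≠ 0) (i : ℤ) (n : ℕ) (c : ℕ → ℝ) :
    cellAverage (fun t => ∑ k ∈ Finset.range n, c k * (t - x) ^ k) x h i =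
      ∑ k ∈ Finset.range n,
        c k * (h ^ k * (((i:ℝ) + 1/2) ^ (k + 1) - ((i:ℝ) - 1/2) ^ (k + 1)) / (k + 1)) := by
  rw [cellAverage, intervalIntegral.integral_finsetSum fun k _ =>
    Continuous.intervalIntegrable (by fun_prop) _ _, Finset.mul_sum]
  refine Finset.sum_congr rfl fun k _ => ?_
  rw [intervalIntegral.integral_const_mul, ← cellAverage_pow_sub x hh i k, cellAverage]
  ring

lemma wenoIdealError_polynomial (x : ℝ) {h : ℝ} (hh : h ≠ 0) (c : ℕ → ℝ) :
    wenoIdealError (fun t => ∑ k ∈ Finset.range 6, c k * (t - x) ^ k) x h =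
      -2 * c 5 * h ^ 5 := by
  simp only [wenoIdealError, cellAverage_polynomial x hh]
  simp only [Finset.sum_range_succ, Finset.sum_range_zero]
  push_cast
  ring

lemma abs_cellAverage_le {g : ℝ → ℝ} {x h M : ℝ} (hh : 0 < h) {i : ℤ} (hi : |i| ≤ 2)
    (hg : ∀ t, |t - x| ≤ 5/2 * h → |g t| ≤ M) :
    |cellAverage g x h i| ≤ M := by
  have hi' : |(i:ℝ)| ≤ 2 := by exact_mod_cast hi
  have hcell : ∀ t ∈ Set.uIoc (x + ((i:ℝ) - 1/2)*h) (x + ((i:ℝ) + 1/2)*h), ‖g t‖ ≤ M := by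
    intro t ht
    rw [Set.uIoc_of_le (by nlinarith)] at ht
    refine hg t (abs_le.mpr ⟨?_, ?_⟩) <;> nlinarith [ht.1, ht.2, abs_le.mp hi']
  have hint := intervalIntegral.norm_integral_le_of_norm_le_const hcell
  rw [Real.norm_eq_abs, show x + ((i:ℝ) + 1/2)*h - (x + ((i:ℝ) - 1/2)*h) = h by ring,
    abs_of_pos hh] at hint
  rw [cellAverage, abs_mul, abs_of_pos (one_div_pos.mpr hh)]
  calc 1 / h * |∫ t in (x + ((i:ℝ) - 1/2)*h)..(x + ((i:ℝ) + 1/2)*h), g t|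
      ≤ 1 / h * (M * h) := by gcongr
    _ = M := by field_simp

lemma abs_wenoIdealError_le {g : ℝ → ℝ} {x h M : ℝ} (hh : 0 < h)
    (hg : ∀ t, |t - x| ≤ 5/2 * h → |g t| ≤ M) :
    |wenoIdealError g x h| ≤ 3 * M := by
  have hM : 0 ≤ M := (abs_nonneg _).trans (hg x (by simp; positivity))
  have havg (i : ℤ) (hi : |i| ≤ 2) := abs_le.mp (abs_cellAverage_le hh hi hg)
  have hm2 := havg (-2) (by norm_num)
  have hm1 := havg (-1) (by norm_num)
  have hc0 := havg 0 (by norm_num)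
  have hp1 := havg 1 (by norm_num)
  have hp2 := havg 2 (by norm_num)
  have hmid := abs_le.mp (hg (x + h/2) (by
    rw [add_sub_cancel_left, abs_of_pos (by positivity)]
    linarith))
  rw [wenoIdealError, abs_le]
  constructor <;> linarith

lemma wenoIdealError_isBigO_of_isBigO {g : ℝ → ℝ} {x : ℝ}
    (hg : g =O[𝓝 x] fun t => (t - x) ^ 5) :
    wenoIdealError g x =O[𝓝[>] 0] fun h => h ^ 5 := by
  obtain ⟨C, hCpos, hC⟩ := hg.exists_pos
  obtain ⟨δ, hδ, hball⟩ := Metric.eventually_nhds_iff.mp hC.bound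
  refine IsBigO.of_bound (3 * (C * (5/2) ^ 5)) ?_
  filter_upwards [self_mem_nhdsWithin,
    nhdsWithin_le_nhds (Iio_mem_nhds (show (0:ℝ) < 2/5 * δ by positivity))] with h hpos hsmall
  have hpos : 0 < h := hpos
  have hbound : ∀ t, |t - x| ≤ 5/2 * h → |g t| ≤ C * (5/2 * h) ^ 5 := fun t ht => by
    have hgt := hball (show dist t x < δ by rw [Real.dist_eq]; linarith [Set.mem_Iio.mp hsmall])
    rw [Real.norm_eq_abs, Real.norm_eq_abs, abs_pow] at hgt
    exact hgt.trans (by gcongr)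
  rw [Real.norm_eq_abs, Real.norm_eq_abs, abs_of_pos (pow_pos hpos 5)]
  calc |wenoIdealError g x h| ≤ 3 * (C * (5/2 * h) ^ 5) := abs_wenoIdealError_le hpos hbound
    _ = 3 * (C * (5/2) ^ 5) * h ^ 5 := by ring

lemma wenoIdealError_isBigO_of_sub_polynomial {g : ℝ → ℝ} (hg : Continuous g) (x : ℝ)
    (c : ℕ → ℝ)
    (hR : (fun t => g t - ∑ k ∈ Finset.range 6, c k * (t - x) ^ k) =O[𝓝 x]
      fun t => (t - x) ^ 5) :
    wenoIdealError g x =O[𝓝[>] 0] fun h => h ^ 5 := by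
  set P : ℝ → ℝ := fun t => ∑ k ∈ Finset.range 6, c k * (t - x) ^ k
  have hP : Continuous P := by fun_prop
  have hsplit :
      wenoIdealError g x = fun h => wenoIdealError P x h + wenoIdealError (g - P) x h := by
    funext h
    rw [← wenoIdealError_add hP (hg.sub hP), add_sub_cancel]
  have hPerr : wenoIdealError P x =ᶠ[𝓝[>] 0] fun h => -2 * c 5 * h ^ 5 := by
    filter_upwards [self_mem_nhdsWithin] with h hpos
    exact wenoIdealError_polynomial x (ne_of_gt hpos) c
  rw [hsplit]
  exact (hPerr.trans_isBigO (isBigO_const_mul_self _ _ _)).add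
    (wenoIdealError_isBigO_of_isBigO hR)

/-- For f ∈ C⁵, the ideal-weight combination of the three
third-order substencil reconstructions from cell averages is a fifth-order
accurate approximation of f(x + h/2):
(1/10)u⁰(h) + (6/10)u¹(h) + (3/10)u²(h) − f(x + h/2) = O(h⁵) as h → 0⁺. -/
theorem weno_ideal_weights_fifth_order
    (f : ℝ → ℝ) (hf : ContDiff ℝ 5 f) (x : ℝ)
    (ubar : ℤ → ℝ → ℝ)
    (hubar : ∀ (i : ℤ) (h : ℝ), ubar i h =
      (1/h) * ∫ t in (x + ((i:ℝ) - 1/2)*h)..(x + ((i:ℝ) + 1/2)*h), f t)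
    (u0 u1 u2 : ℝ → ℝ)
    (hu0 : ∀ h : ℝ, u0 h = (2*ubar (-2) h - 7*ubar (-1) h + 11*ubar 0 h)/6)
    (hu1 : ∀ h : ℝ, u1 h = (-(ubar (-1) h) + 5*ubar 0 h + 2*ubar 1 h)/6)
    (hu2 : ∀ h : ℝ, u2 h = (2*ubar 0 h + 5*ubar 1 h - ubar 2 h)/6) :
    (fun h : ℝ => (1/10)*u0 h + (6/10)*u1 h + (3/10)*u2 h - f (x + h/2))
      =O[nhdsWithin (0:ℝ) (Set.Ioi 0)] (fun h : ℝ => h^5) := by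
  obtain rfl : ubar = fun i h => cellAverage f x h i := funext₂ hubar
  obtain rfl : u0 = _ := funext hu0
  obtain rfl : u1 = _ := funext hu1
  obtain rfl : u2 = _ := funext hu2
  have htaylor := (taylor_isLittleO_univ (x₀ := x) (n := 5) hf).isBigO
  simp only [taylor_within_apply, smul_eq_mul] at htaylor
  refine wenoIdealError_isBigO_of_sub_polynomial hf.continuous x
    (fun k => (k ! : ℝ)⁻¹ * iteratedDerivWithin k f Set.univ x) ?_
  simpa only [mul_right_comm] using htaylor
end
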